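/- Let f : ℝⁿ → ℝⁿ be a contraction with constant k < 1 and fixed point x*. Suppose L : ℝⁿ → ℝ has an M-Lipschitz gradient and the true implicit gradient is g = (∇L(x*))ᵀ(I - Df(x*))⁻¹ Dθ while the Jacobian-free gradient is ĝ = (∇L(x*))ᵀ Dθ, where Df(x*) is the Jacobian of f at x* with ‖Df(x*)‖ ≤ k and Dθ is any matrix. Then ‖g - ĝ‖ ≤ (k/(1-k)) · ‖∇L(x*)‖ · ‖Dθ‖. -/
import Mathlib


/-- Bound on the discrepancy between the exact implicit gradient
`g = ∇L(x*)ᵀ (I - Df(x*))⁻¹ Dθ` and the Jacobian-free gradient `ĝ = ∇L(x*)ᵀ Dθ`: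
`‖g - ĝ‖ ≤ (k/(1-k)) ‖∇L(x*)‖ ‖Dθ‖`. -/
theorem jacobian_free_gradient_error
    {n m : ℕ}
    (f : EuclideanSpace ℝ (Fin n) → EuclideanSpace ℝ (Fin n))
    (k : ℝ) (hk0 : 0 ≤ k) (hk1 : k < 1)
    (hf : LipschitzWith (Real.toNNReal k) f)
    (xstar : EuclideanSpace ℝ (Fin n)) (hfix : f xstar = xstar)
    (L : EuclideanSpace ℝ (Fin n) → ℝ) (M : NNReal)
    (hL : LipschitzWith M (gradient L))
    (hJ : ‖fderiv ℝ f xstar‖ ≤ k)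
    (B : EuclideanSpace ℝ (Fin n) ≃L[ℝ] EuclideanSpace ℝ (Fin n))
    (hB : (B : EuclideanSpace ℝ (Fin n) →L[ℝ] EuclideanSpace ℝ (Fin n))
        = 1 - fderiv ℝ f xstar)
    (Dθ : EuclideanSpace ℝ (Fin m) →L[ℝ] EuclideanSpace ℝ (Fin n)) :
    ‖(fderiv ℝ L xstar).comp
        ((B.symm : EuclideanSpace ℝ (Fin n) →L[ℝ] EuclideanSpace ℝ (Fin n)).comp Dθ)
      - (fderiv ℝ L xstar).comp Dθ‖
      ≤ k / (1 - k) * ‖fderiv ℝ L xstar‖ * ‖Dθ‖ := by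
  set A := fderiv ℝ f xstar with hA
  set C := (B.symm : EuclideanSpace ℝ (Fin n) →L[ℝ] EuclideanSpace ℝ (Fin n)) with hC
  set Lp := fderiv ℝ L xstar with hLp
  have h1k : (0:ℝ) < 1 - k := by linarith
  -- bound on ‖C‖
  have hCB : ∀ y, C (B y) = y := fun y => B.symm_apply_apply y
  have hCnorm : ‖C‖ ≤ 1 / (1 - k) := by
    apply ContinuousLinearMap.opNorm_le_bound _ (by positivity)
    intro y
    have hy : ‖(B : EuclideanSpace ℝ (Fin n) →L[ℝ] EuclideanSpace ℝ (Fin n)) (C y)‖ = ‖y‖ := by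
      have : (B : EuclideanSpace ℝ (Fin n) →L[ℝ] EuclideanSpace ℝ (Fin n)) (C y) = y :=
        B.apply_symm_apply y
      rw [this]
    have hBC : (B : EuclideanSpace ℝ (Fin n) →L[ℝ] EuclideanSpace ℝ (Fin n)) (C y)
        = C y - A (C y) := by rw [hB]; simp
    have hAle : ‖A (C y)‖ ≤ k * ‖C y‖ :=
      le_trans (A.le_opNorm _) (by
        have := mul_le_mul_of_nonneg_right hJ (norm_nonneg (C y)); linarith)
    have : ‖C y‖ - k * ‖C y‖ ≤ ‖y‖ := by
      calc ‖C y‖ - k * ‖C y‖ ≤ ‖C y‖ - ‖A (C y)‖ := by linarith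
        _ ≤ ‖C y - A (C y)‖ := by
            have := norm_sub_norm_le (C y) (A (C y)); linarith [norm_sub_norm_le (C y) (A (C y))]
        _ = ‖y‖ := by rw [← hBC, hy]
    rw [div_mul_eq_mul_div, le_div_iff₀ h1k]
    nlinarith [norm_nonneg y]
  -- rewrite the difference
  have hdiff : Lp.comp (C.comp Dθ) - Lp.comp Dθ = Lp.comp ((C.comp A).comp Dθ) := by
    have hCmI : C.comp ((1 : EuclideanSpace ℝ (Fin n) →L[ℝ] EuclideanSpace ℝ (Fin n)) - (B : EuclideanSpace ℝ (Fin n) →L[ℝ] EuclideanSpace ℝ (Fin n))) = C - 1 := by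
      ext y
      simp [ContinuousLinearMap.comp_apply, ContinuousLinearMap.sub_apply, hCB]
    have hCA : C.comp A = C - 1 := by
      rw [← hCmI, hB]; congr 1; abel
    ext v
    simp [ContinuousLinearMap.comp_apply, ContinuousLinearMap.sub_apply, hCA, map_sub]
  rw [hdiff]
  have h1 : ‖Lp.comp ((C.comp A).comp Dθ)‖ ≤ ‖Lp‖ * (‖C‖ * ‖A‖) * ‖Dθ‖ := by
    calc ‖Lp.comp ((C.comp A).comp Dθ)‖ ≤ ‖Lp‖ * ‖(C.comp A).comp Dθ‖ :=
          ContinuousLinearMap.opNorm_comp_le _ _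
      _ ≤ ‖Lp‖ * (‖C.comp A‖ * ‖Dθ‖) := by
          exact mul_le_mul_of_nonneg_left (ContinuousLinearMap.opNorm_comp_le _ _) (norm_nonneg _)
      _ ≤ ‖Lp‖ * (‖C‖ * ‖A‖ * ‖Dθ‖) := by
          have := ContinuousLinearMap.opNorm_comp_le C A
          exact mul_le_mul_of_nonneg_left
            (mul_le_mul_of_nonneg_right this (norm_nonneg _)) (norm_nonneg _)
      _ = ‖Lp‖ * (‖C‖ * ‖A‖) * ‖Dθ‖ := by ring
  refine h1.trans ?_
  have hCA : ‖C‖ * ‖A‖ ≤ k / (1 - k) := by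
    rw [div_eq_mul_one_div]
    calc ‖C‖ * ‖A‖ ≤ (1 / (1 - k)) * k :=
          mul_le_mul hCnorm hJ (norm_nonneg _) (by positivity)
      _ = k * (1 / (1 - k)) := by ring
  calc ‖Lp‖ * (‖C‖ * ‖A‖) * ‖Dθ‖ ≤ ‖Lp‖ * (k / (1 - k)) * ‖Dθ‖ := by
        apply mul_le_mul_of_nonneg_right _ (norm_nonneg _)
        exact mul_le_mul_of_nonneg_left hCA (norm_nonneg _)
    _ = k / (1 - k) * ‖Lp‖ * ‖Dθ‖ := by ring
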